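/- arXiv:2006.00994 — 4 statements merged into one kernel-verified Lean document; each statement's English description precedes it below -/
import Mathlib

section
/- There exists a 13-vertex planar graph with no Theta graph on 6 vertices as a subgraph having 27 edges; in particular, 27 > (18/7)·13 - 48/7, so the bound ex_P(n,Θ₆) ≤ (18/7)n - 48/7 fails at n = 13. -/
open SimpleGraph

/-- `H` is a minor of `G`: there is an assignment of disjoint connected branch sets
of `G` to the vertices of `H` realizing all edges of `H`. -/
def HasMinor {V : Type*} {W : Type*} (G : SimpleGraph V) (H : SimpleGraph W) : Prop :=
  ∃ f : V → Option W,
    (∀ w : W, ∃ v, f v = some w) ∧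
    (∀ w : W, (G.induce {v | f v = some w}).Preconnected) ∧
    (∀ w₁ w₂ : W, H.Adj w₁ w₂ →
      ∃ v₁ v₂, f v₁ = some w₁ ∧ f v₂ = some w₂ ∧ G.Adj v₁ v₂)

/-- Planarity, via Wagner's theorem: no `K₅` minor and no `K₃,₃` minor. -/
def IsPlanar {V : Type*} (G : SimpleGraph V) : Prop :=
  ¬ HasMinor G (completeGraph (Fin 5)) ∧
    ¬ HasMinor G (completeBipartiteGraph (Fin 3) (Fin 3))

/-- `G` contains a Theta graph on 6 vertices: a 6-cycle together with a chord
joining two non-consecutive vertices of the cycle. -/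
def HasTheta6 {V : Type*} (G : SimpleGraph V) : Prop :=
  ∃ v : Fin 6 → V, Function.Injective v ∧
    (∀ i : Fin 6, G.Adj (v i) (v (i + 1))) ∧
    ∃ i j : Fin 6, i ≠ j ∧ j ≠ i + 1 ∧ i ≠ j + 1 ∧ G.Adj (v i) (v j)

/-!
The graph consists of three copies of `K₅ − e` glued in a chain at two cut vertices. A cut
vertex `c` can be crossed only once, so a cycle, and likewise a minor model of a graph that stays
connected after deleting any vertex (such as `K₅` and `K₃,₃`), lies in the union of `c` with one
side of the separation. Hence both live inside a single block, which has only five vertices: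
there is no `6`-cycle, no `K₃,₃` minor (six disjoint branch sets), and a `K₅` minor would make the
block a clique, whereas each block misses an edge. Each block contributes `10 − 1 = 9` edges.
-/

namespace SimpleGraph

variable {V V' : Type*} {G : SimpleGraph V}

theorem Reachable.of_adj_imp {p : V → Prop} (hp : ∀ ⦃u v⦄, G.Adj u v → p u → p v) {u v : V}
    (h : G.Reachable u v) (hu : p u) : p v := by
  rw [reachable_iff_reflTransGen] at h
  induction h with
  | refl => exact hu
  | tail _ hadj ih => exact hp hadj ih

theorem Reachable.map_of_adj {G' : SimpleGraph V'} (φ : V → V')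
    (hφ : ∀ ⦃u v⦄, G.Adj u v → G'.Reachable (φ u) (φ v)) {u v : V} (h : G.Reachable u v) :
    G'.Reachable (φ u) (φ v) := by
  rw [reachable_iff_reflTransGen] at h ⊢
  exact Relation.ReflTransGen.lift' φ
    (fun a b hab => (reachable_iff_reflTransGen _ _).1 (hφ hab)) u v h

theorem preconnected_induce_of_adj_or_exists_adj_adj {s : Set V}
    (h : ∀ u ∈ s, ∀ v ∈ s, u ≠ v → G.Adj u v ∨ ∃ x ∈ s, G.Adj u x ∧ G.Adj x v) :
    (G.induce s).Preconnected := by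
  rintro ⟨u, hu⟩ ⟨v, hv⟩
  obtain rfl | huv := eq_or_ne u v
  · rfl
  obtain hadj | ⟨x, hx, hux, hxv⟩ := h u hu v hv huv
  · exact Adj.reachable (G := G.induce s) hadj
  · exact (show (G.induce s).Adj ⟨u, hu⟩ ⟨x, hx⟩ from hux).reachable.trans
      (show (G.induce s).Adj ⟨x, hx⟩ ⟨v, hv⟩ from hxv).reachable

theorem completeGraph_preconnected_induce_compl_singleton {W : Type*} (w : W) :
    ((completeGraph W).induce {w}ᶜ).Preconnected := by
  rw [induce_top]
  exact preconnected_top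

theorem completeBipartiteGraph_three_three_preconnected :
    (completeBipartiteGraph (Fin 3) (Fin 3)).Preconnected := by
  refine (induceUnivIso _).preconnected_iff.1 (preconnected_induce_of_adj_or_exists_adj_adj ?_)
  simp only [completeBipartiteGraph_adj, Set.mem_univ, true_and]
  decide

theorem completeBipartiteGraph_three_three_preconnected_induce_compl_singleton
    (w : Fin 3 ⊕ Fin 3) :
    ((completeBipartiteGraph (Fin 3) (Fin 3)).induce {w}ᶜ).Preconnected := by
  refine preconnected_induce_of_adj_or_exists_adj_adj ?_
  simp only [completeBipartiteGraph_adj]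
  revert w
  decide

end SimpleGraph

section Minors

variable {V W : Type*} {G : SimpleGraph V} {H : SimpleGraph W}

structure IsMinorModel (G : SimpleGraph V) (H : SimpleGraph W) (f : V → Option W) : Prop where
  exists_mem : ∀ w, ∃ v, f v = some w
  preconnected : ∀ w, (G.induce {v | f v = some w}).Preconnected
  exists_adj : ∀ w₁ w₂, H.Adj w₁ w₂ → ∃ v₁ v₂, f v₁ = some w₁ ∧ f v₂ = some w₂ ∧ G.Adj v₁ v₂

def HasMinorIn (G : SimpleGraph V) (H : SimpleGraph W) (S : Set V) : Prop :=
  ∃ f, IsMinorModel G H f ∧ ∀ v w, f v = some w → v ∈ S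

theorem HasMinor.hasMinorIn_univ (h : HasMinor G H) : HasMinorIn G H Set.univ := by
  obtain ⟨f, hne, hconn, hadj⟩ := h
  exact ⟨f, ⟨hne, hconn, hadj⟩, fun _ _ _ => trivial⟩

theorem HasMinorIn.mono {S T : Set V} (h : HasMinorIn G H S) (hST : S ⊆ T) : HasMinorIn G H T :=
  let ⟨f, hf, hfS⟩ := h
  ⟨f, hf, fun v w hv => hST (hfS v w hv)⟩

theorem IsMinorModel.exists_injective {f : V → Option W} (hf : IsMinorModel G H f) :
    ∃ g : W → V, Function.Injective g ∧ ∀ w, f (g w) = some w := by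
  choose g hg using hf.exists_mem
  exact ⟨g, fun a b hab => Option.some_injective _ (by rw [← hg, hab, hg]), hg⟩

theorem HasMinorIn.card_le [Fintype W] {S : Finset V} (h : HasMinorIn G H S) :
    Fintype.card W ≤ S.card := by
  obtain ⟨f, hf, hfS⟩ := h
  obtain ⟨g, hinj, hg⟩ := hf.exists_injective
  simpa using Finset.card_le_card_of_injOn (s := Finset.univ) g (fun w _ => hfS _ _ (hg w))
    hinj.injOn

/-- With no room to spare, every branch set is a single vertex. -/
theorem HasMinorIn.isClique_of_card_le [Fintype W] {S : Finset V}
    (h : HasMinorIn G (completeGraph W) S) (hS : S.card ≤ Fintype.card W) :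
    G.IsClique (S : Set V) := by
  obtain ⟨f, hf, hfS⟩ := h
  obtain ⟨g, hinj, hg⟩ := hf.exists_injective
  have hsurj := Finset.surj_on_of_inj_on_of_card_le (s := Finset.univ) (fun w _ => g w)
    (fun w _ => hfS _ _ (hg w)) (fun a b _ _ hab => hinj hab) (by simpa using hS)
  have hbranch : ∀ v w, f v = some w → v = g w := by
    intro v w hv
    obtain ⟨w', -, rfl⟩ := hsurj v (hfS v w hv)
    rw [← Option.some_injective _ ((hg w').symm.trans hv)]
  intro x hx y hy hxy
  obtain ⟨a, -, rfl⟩ := hsurj x hx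
  obtain ⟨b, -, rfl⟩ := hsurj y hy
  obtain ⟨v₁, v₂, h₁, h₂, hadj⟩ := hf.exists_adj a b fun hab => hxy (congrArg g hab)
  rwa [hbranch v₁ a h₁, hbranch v₂ b h₂] at hadj

end Minors

section Separations

variable {V W : Type*} {G : SimpleGraph V} {H : SimpleGraph W}

structure IsCutSeparation (G : SimpleGraph V) (c : V) (A B : Set V) : Prop where
  mem_left : c ∈ A
  mem_right : c ∈ B
  mem_or_mem : ∀ v, v ∈ A ∨ v ∈ B
  eq_or_eq_of_adj : ∀ a b, G.Adj a b → a ∈ A → b ∈ B → a = c ∨ b = c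

namespace IsCutSeparation

variable {c : V} {A B : Set V}

theorem symm (hs : IsCutSeparation G c A B) : IsCutSeparation G c B A where
  mem_left := hs.mem_right
  mem_right := hs.mem_left
  mem_or_mem v := (hs.mem_or_mem v).symm
  eq_or_eq_of_adj a b hab ha hb := (hs.eq_or_eq_of_adj b a hab.symm hb ha).symm

theorem mem_left_of_adj (hs : IsCutSeparation G c A B) {a b : V} (hab : G.Adj a b) (ha : a ∈ A)
    (hac : a ≠ c) : b ∈ A := by
  rcases hs.mem_or_mem b with hb | hb
  · exact hb
  · rcases hs.eq_or_eq_of_adj a b hab ha hb with h | rfl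
    · exact absurd h hac
    · exact hs.mem_left

theorem subset_left_of_preconnected (hs : IsCutSeparation G c A B) {X : Set V}
    (hX : (G.induce X).Preconnected) (hcX : c ∉ X) {x : V} (hx : x ∈ X) (hxA : x ∈ A) :
    X ⊆ A := fun y hy =>
  (hX ⟨x, hx⟩ ⟨y, hy⟩).of_adj_imp (p := fun z : X => (z : V) ∈ A)
    (fun u _ huv hu => hs.mem_left_of_adj huv hu fun h => hcX (h ▸ u.2)) hxA

/-- The retraction of `X` onto `X ∩ A` collapsing `X \ A` to `c` maps edges to edges or
to single vertices. -/
theorem preconnected_induce_inter_left (hs : IsCutSeparation G c A B) {X : Set V}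
    (hX : (G.induce X).Preconnected) (hcX : c ∈ X) : (G.induce (X ∩ A)).Preconnected := by
  classical
  let r : X → ↥(X ∩ A) := fun x => if hx : (x : V) ∈ A then ⟨x, x.2, hx⟩ else ⟨c, hcX, hs.mem_left⟩
  have hr : ∀ x : ↥(X ∩ A), r ⟨x, x.2.1⟩ = x := fun x => dif_pos x.2.2
  have hcollapse : ∀ a b : X, G.Adj a b → (a : V) ∈ A → (b : V) ∉ A → r a = r b := by
    intro a b hab ha hb
    have hac : (a : V) = c :=
      (hs.eq_or_eq_of_adj a b hab ha ((hs.mem_or_mem b).resolve_left hb)).resolve_right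
        fun h => hb (h ▸ hs.mem_left)
    simp only [r, dif_pos ha, dif_neg hb, hac]
  intro u v
  rw [← hr u, ← hr v]
  refine (hX _ _).map_of_adj r fun a b hab => ?_
  by_cases ha : (a : V) ∈ A <;> by_cases hb : (b : V) ∈ A
  · simp only [r, dif_pos ha, dif_pos hb]
    exact Adj.reachable hab
  · rw [hcollapse a b hab ha hb]
  · rw [hcollapse b a hab.symm hb ha]
  · simp only [r, dif_neg ha, dif_neg hb]
    rfl

variable {n : ℕ} [NeZero n] {v : Fin n → V}

open Fin.NatCast Fin.CommRing

/-- Walking around the cycle from the vertex after the only possible visit `i₀` to `c`, one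
never leaves `A`. -/
theorem cycle_subset_left (hs : IsCutSeparation G c A B)
    (hcyc : ∀ i, G.Adj (v i) (v (i + 1))) {i₀ : Fin n} (hi₀ : ∀ j, v j = c → j = i₀)
    (hA : v (i₀ + 1) ∈ A) (i : Fin n) : v i ∈ A := by
  have key : ∀ k : ℕ, k < n → v (i₀ + 1 + (k : Fin n)) ∈ A := by
    intro k
    induction k with
    | zero => intro _; simpa using hA
    | succ k ih =>
      intro hk
      have hne : v (i₀ + 1 + (k : Fin n)) ≠ c := by
        intro h
        have hzero : ((k + 1 : ℕ) : Fin n) = 0 := by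
          push_cast
          linear_combination hi₀ _ h
        exact k.succ_ne_zero (Nat.eq_zero_of_dvd_of_lt (Fin.natCast_eq_zero.1 hzero) hk)
      have := hs.mem_left_of_adj (hcyc _) (ih (by omega)) hne
      rwa [Nat.cast_succ, ← add_assoc]
  simpa using key (i - (i₀ + 1)).val (Fin.is_lt _)

theorem cycle_subset_left_or_right (hs : IsCutSeparation G c A B) (hv : Function.Injective v)
    (hcyc : ∀ i, G.Adj (v i) (v (i + 1))) : (∀ i, v i ∈ A) ∨ (∀ i, v i ∈ B) := by
  obtain ⟨i₀, hi₀⟩ : ∃ i₀, ∀ j, v j = c → j = i₀ := by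
    by_cases h : ∃ j, v j = c
    · obtain ⟨j, hj⟩ := h
      exact ⟨j, fun k hk => hv (hk.trans hj.symm)⟩
    · exact ⟨0, fun j hj => (h ⟨j, hj⟩).elim⟩
  rcases hs.mem_or_mem (v (i₀ + 1)) with h | h
  · exact Or.inl (hs.cycle_subset_left hcyc hi₀ h)
  · exact Or.inr (hs.symm.cycle_subset_left hcyc hi₀ h)

end IsCutSeparation

namespace IsMinorModel

variable {c : V} {A B : Set V} {f : V → Option W}

theorem restrict [DecidablePred (· ∈ A)] (hf : IsMinorModel G H f) (hs : IsCutSeparation G c A B)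
    (hA : ∀ w, f c ≠ some w → ∀ v, f v = some w → v ∈ A) :
    IsMinorModel G H fun v => if v ∈ A then f v else none := by
  have hbranch : ∀ w, {v | (if v ∈ A then f v else none) = some w} = {v | f v = some w} ∩ A := by
    intro w
    ext v
    by_cases hv : v ∈ A <;> simp [hv]
  have hboth : ∀ {w₁ w₂ v₁ v₂}, f v₁ = some w₁ → f v₂ = some w₂ → G.Adj v₁ v₂ →
      f c ≠ some w₁ → v₁ ∈ A ∧ v₂ ∈ A := fun h₁ _ hadj hc =>
    ⟨hA _ hc _ h₁, hs.mem_left_of_adj hadj (hA _ hc _ h₁) fun h => hc (h ▸ h₁)⟩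
  refine ⟨fun w => ?_, fun w => ?_, fun w₁ w₂ hw => ?_⟩
  · by_cases hw : f c = some w
    · exact ⟨c, by simp [hs.mem_left, hw]⟩
    · obtain ⟨v, hv⟩ := hf.exists_mem w
      exact ⟨v, by simp [hA w hw v hv, hv]⟩
  · rw [hbranch]
    by_cases hw : f c = some w
    · exact hs.preconnected_induce_inter_left (hf.preconnected w) hw
    · rw [Set.inter_eq_left.2 (show {v | f v = some w} ⊆ A from hA w hw)]
      exact hf.preconnected w
  · obtain ⟨v₁, v₂, h₁, h₂, hadj⟩ := hf.exists_adj w₁ w₂ hw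
    have hmem : v₁ ∈ A ∧ v₂ ∈ A := by
      by_cases hc : f c = some w₁
      · have hc₂ : f c ≠ some w₂ := fun h => hw.ne (Option.some_injective _ (hc.symm.trans h))
        exact (hboth h₂ h₁ hadj.symm hc₂).symm
      · exact hboth h₁ h₂ hadj hc
    exact ⟨v₁, v₂, by simp [hmem.1, h₁], by simp [hmem.2, h₂], hadj⟩

theorem hasMinorIn_inter (hf : IsMinorModel G H f) {S : Set V}
    (hfS : ∀ v w, f v = some w → v ∈ S) (hs : IsCutSeparation G c A B)
    (hA : ∀ w, f c ≠ some w → ∀ v, f v = some w → v ∈ A) : HasMinorIn G H (S ∩ A) := by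
  classical
  refine ⟨_, hf.restrict hs hA, fun v w hv => ?_⟩
  by_cases hvA : v ∈ A
  · rw [if_pos hvA] at hv
    exact ⟨hfS v w hv, hvA⟩
  · simp [hvA] at hv

/-- Adjacent branch sets avoiding `c` lie on the same side, so connectivity of the classes
avoiding `c` spreads one side to all of them. -/
theorem branch_subset_left (hf : IsMinorModel G H f) (hs : IsCutSeparation G c A B)
    {T : Set W} (hT : (H.induce T).Preconnected) (hTc : ∀ w ∈ T, f c ≠ some w)
    {w₁ : W} {v₁ : V} (hw₁ : w₁ ∈ T) (hv₁ : f v₁ = some w₁) (hv₁A : v₁ ∈ A) :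
    ∀ w ∈ T, ∀ v, f v = some w → v ∈ A := by
  have hside : ∀ w ∈ T, ∀ u, f u = some w → u ∈ A → ∀ v, f v = some w → v ∈ A :=
    fun w hw u hu huA v hv =>
      hs.subset_left_of_preconnected (hf.preconnected w) (hTc w hw) hu huA hv
  intro w hw
  refine (hT ⟨w₁, hw₁⟩ ⟨w, hw⟩).of_adj_imp (p := fun w : T => ∀ v, f v = some w → v ∈ A)
    ?_ (hside w₁ hw₁ v₁ hv₁ hv₁A)
  rintro ⟨a, ha⟩ ⟨b, hb⟩ hab haA
  obtain ⟨va, vb, hva, hvb, hadj⟩ := hf.exists_adj a b hab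
  exact hside b hb vb hvb (hs.mem_left_of_adj hadj (haA va hva) fun h => hTc a ha (h ▸ hva))

end IsMinorModel

theorem HasMinorIn.inter_left_or_inter_right {c : V} {A B S : Set V} (h : HasMinorIn G H S)
    (hH : H.Preconnected) (hH' : ∀ w, (H.induce {w}ᶜ).Preconnected)
    (hs : IsCutSeparation G c A B) : HasMinorIn G H (S ∩ A) ∨ HasMinorIn G H (S ∩ B) := by
  obtain ⟨f, hf, hfS⟩ := h
  set T : Set W := {w | f c ≠ some w}
  have hT : (H.induce T).Preconnected := by
    cases hfc : f c with
    | none =>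
      rw [show T = Set.univ by ext; simp [T, hfc]]
      exact (induceUnivIso H).preconnected_iff.2 hH
    | some w₀ =>
      rw [show T = {w₀}ᶜ by ext; simp [T, hfc, eq_comm]]
      exact hH' w₀
  rcases T.eq_empty_or_nonempty with hT₀ | ⟨w₁, hw₁⟩
  · refine Or.inl (hf.hasMinorIn_inter hfS hs fun w hw => ?_)
    exact absurd (show w ∈ T from hw) (hT₀ ▸ Set.notMem_empty w)
  obtain ⟨v₁, hv₁⟩ := hf.exists_mem w₁
  rcases hs.mem_or_mem v₁ with hv₁A | hv₁B
  · exact Or.inl (hf.hasMinorIn_inter hfS hs fun w hw =>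
      hf.branch_subset_left hs hT (fun _ h => h) hw₁ hv₁ hv₁A w hw)
  · exact Or.inr (hf.hasMinorIn_inter hfS hs.symm fun w hw =>
      hf.branch_subset_left hs.symm hT (fun _ h => h) hw₁ hv₁ hv₁B w hw)

end Separations

section ChainGraph

def block (k : Fin 3) : Finset (Fin 13) :=
  Finset.univ.filter fun x => 4 * k.val ≤ x.val ∧ x.val ≤ 4 * k.val + 4

def chainGraph : SimpleGraph (Fin 13) where
  Adj x y := x ≠ y ∧ ∃ k, x ∈ block k ∧ y ∈ block k ∧
    s(x.val, y.val) ≠ s(4 * k.val + 1, 4 * k.val + 2)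
  symm := ⟨fun _ _ ⟨hxy, k, hx, hy, he⟩ => ⟨hxy.symm, k, hy, hx, by rwa [Sym2.eq_swap]⟩⟩
  loopless := ⟨fun _ h => h.1 rfl⟩

instance : DecidableRel chainGraph.Adj := fun x y =>
  inferInstanceAs (Decidable (x ≠ y ∧ ∃ k, x ∈ block k ∧ y ∈ block k ∧
    s(x.val, y.val) ≠ s(4 * k.val + 1, 4 * k.val + 2)))

theorem card_block (k : Fin 3) : (block k).card = 5 := by
  revert k
  decide

theorem chainGraph_edgeSet_ncard : chainGraph.edgeSet.ncard = 27 := by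
  rw [Set.ncard_eq_toFinset_card']
  decide

theorem chainGraph_not_isClique_block (k : Fin 3) :
    ¬ chainGraph.IsClique (block k : Set (Fin 13)) := by
  obtain ⟨x, hx, y, hy, hxy, hnadj⟩ :
      ∃ x ∈ block k, ∃ y ∈ block k, x ≠ y ∧ ¬ chainGraph.Adj x y := by
    revert k
    decide
  exact fun h => hnadj (h hx hy hxy)

theorem chainGraph_isCutSeparation (c : Fin 13) (hc : c = 4 ∨ c = 8) :
    IsCutSeparation chainGraph c {x | x ≤ c} {x | c ≤ x} where
  mem_left := le_refl c
  mem_right := le_refl c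
  mem_or_mem v := le_total v c
  eq_or_eq_of_adj := by
    revert c
    decide

theorem chainGraph_exists_block {P : Set (Fin 13) → Prop} (huniv : P Set.univ)
    (hsplit : ∀ c A B S, IsCutSeparation chainGraph c A B → P S → P (S ∩ A) ∨ P (S ∩ B))
    (hmono : ∀ S T, S ⊆ T → P S → P T) : ∃ k, P (block k) := by
  rcases hsplit 4 _ _ _ (chainGraph_isCutSeparation 4 (Or.inl rfl)) huniv with h | h
  · exact ⟨0, hmono _ _ (fun x hx => by revert x; decide) h⟩
  rcases hsplit 8 _ _ _ (chainGraph_isCutSeparation 8 (Or.inr rfl)) h with h | h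
  · exact ⟨1, hmono _ _ (fun x hx => by revert x; decide) h⟩
  · exact ⟨2, hmono _ _ (fun x hx => by revert x; decide) h⟩

theorem chainGraph_card_le_five_of_cycle {n : ℕ} [NeZero n] {v : Fin n → Fin 13}
    (hv : Function.Injective v) (hcyc : ∀ i, chainGraph.Adj (v i) (v (i + 1))) : n ≤ 5 := by
  obtain ⟨k, hk⟩ := chainGraph_exists_block (P := fun S => ∀ i, v i ∈ S) (fun _ => trivial)
    (fun _ _ _ _ hs hS => (hs.cycle_subset_left_or_right hv hcyc).imp
      (fun h i => ⟨hS i, h i⟩) (fun h i => ⟨hS i, h i⟩))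
    (fun _ _ hST h i => hST (h i))
  calc n = (Finset.univ : Finset (Fin n)).card := by simp
    _ ≤ (block k).card := Finset.card_le_card_of_injOn v (fun i _ => hk i) hv.injOn
    _ = 5 := card_block k

theorem chainGraph_not_hasTheta6 : ¬ HasTheta6 chainGraph := by
  rintro ⟨v, hv, hcyc, -⟩
  have := chainGraph_card_le_five_of_cycle hv hcyc
  omega

theorem chainGraph_exists_hasMinorIn_block {W : Type*} {H : SimpleGraph W}
    (hH : H.Preconnected) (hH' : ∀ w, (H.induce {w}ᶜ).Preconnected) (h : HasMinor chainGraph H) :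
    ∃ k, HasMinorIn chainGraph H (block k) :=
  chainGraph_exists_block h.hasMinorIn_univ
    (fun _ _ _ _ hs hS => hS.inter_left_or_inter_right hH hH' hs) (fun _ _ hST h => h.mono hST)

theorem chainGraph_isPlanar : IsPlanar chainGraph := by
  constructor
  · intro h
    obtain ⟨k, hk⟩ := chainGraph_exists_hasMinorIn_block preconnected_top
      completeGraph_preconnected_induce_compl_singleton h
    exact chainGraph_not_isClique_block k (hk.isClique_of_card_le (by simp [card_block]))
  · intro h
    obtain ⟨k, hk⟩ := chainGraph_exists_hasMinorIn_block
      completeBipartiteGraph_three_three_preconnected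
      completeBipartiteGraph_three_three_preconnected_induce_compl_singleton h
    have := hk.card_le
    simp [card_block] at this

end ChainGraph

/-- There is a 13-vertex planar graph with no Theta graph on 6 vertices having
27 edges; in particular `27 > 18·13/7 - 48/7`, so the bound
`ex_P(n, Θ₆) ≤ 18n/7 - 48/7` fails at `n = 13`. -/
theorem theta6_counterexample_thirteen :
    (∃ G : SimpleGraph (Fin 13), IsPlanar G ∧ ¬ HasTheta6 G ∧
      G.edgeSet.ncard = 27) ∧
    (27 : ℚ) > 18 / 7 * 13 - 48 / 7 :=
  ⟨⟨chainGraph, chainGraph_isPlanar, chainGraph_not_hasTheta6, chainGraph_edgeSet_ncard⟩,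
    by norm_num⟩
end

section
/- Let G be a plane graph with no Theta graph on 6 vertices as a subgraph, and let B be a triangular-block of G on 6 vertices containing a separating triangle x₁x₂x₃ with two vertices inside and one vertex x₆ outside. Then x₆ cannot be adjacent to two of the vertices x₁, x₂, x₃ (otherwise G contains a Θ₆). -/
open SimpleGraph

private lemma theta6_aux {V : Type*} (G : SimpleGraph V) (a b c d e f : V)
    (d12 : a ≠ b) (d13 : a ≠ c) (d14 : a ≠ d) (d15 : a ≠ e) (d16 : a ≠ f)
    (d23 : b ≠ c) (d24 : b ≠ d) (d25 : b ≠ e) (d26 : b ≠ f)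
    (d34 : c ≠ d) (d35 : c ≠ e) (d36 : c ≠ f)
    (d45 : d ≠ e) (d46 : d ≠ f) (d56 : e ≠ f)
    (h1 : G.Adj a b) (h2 : G.Adj b c) (h3 : G.Adj c d) (h4 : G.Adj d e)
    (h5 : G.Adj e f) (h6 : G.Adj f a)
    (i j : Fin 6) (hij : i ≠ j) (hji : j ≠ i + 1) (hijj : i ≠ j + 1)
    (hchord : G.Adj (![a,b,c,d,e,f] i) (![a,b,c,d,e,f] j)) : HasTheta6 G := by
  refine ⟨![a,b,c,d,e,f], ?_, ?_, i, j, hij, hji, hijj, hchord⟩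
  · have d21 := d12.symm; have d31 := d13.symm; have d41 := d14.symm; have d51 := d15.symm
    have d61 := d16.symm; have d32 := d23.symm; have d42 := d24.symm; have d52 := d25.symm
    have d62 := d26.symm; have d43 := d34.symm; have d53 := d35.symm; have d63 := d36.symm
    have d54 := d45.symm; have d64 := d46.symm; have d65 := d56.symm
    intro i j hij
    fin_cases i <;> fin_cases j <;> first | rfl | exact absurd hij (by assumption)
  · intro k
    fin_cases k
    · exact h1
    · exact h2
    · exact h3
    · exact h4
    · exact h5
    · exact h6

/-- In a planar graph with no Theta graph on 6 vertices, if `x₁,…,x₅` span a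
copy of `K₅` minus the edge `x₂x₄` (the unique maximal planar graph on 5
vertices, with separating triangle `x₁x₂x₃` and inner vertices `x₄, x₅`), then
an extra vertex `x₆` cannot be adjacent to two of `x₁, x₂, x₃`. -/
theorem theta6_separating_triangle {V : Type*} (G : SimpleGraph V)
    (hplanar : IsPlanar G) (hfree : ¬ HasTheta6 G)
    (x₁ x₂ x₃ x₄ x₅ x₆ : V)
    (hdist : List.Pairwise (· ≠ ·) [x₁, x₂, x₃, x₄, x₅, x₆])
    (h12 : G.Adj x₁ x₂) (h23 : G.Adj x₂ x₃) (h13 : G.Adj x₁ x₃)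
    (h14 : G.Adj x₁ x₄) (h34 : G.Adj x₃ x₄) (h45 : G.Adj x₄ x₅)
    (h15 : G.Adj x₁ x₅) (h35 : G.Adj x₃ x₅) (h25 : G.Adj x₂ x₅) :
    ¬ (G.Adj x₆ x₁ ∧ G.Adj x₆ x₂) ∧
    ¬ (G.Adj x₆ x₂ ∧ G.Adj x₆ x₃) ∧
    ¬ (G.Adj x₆ x₁ ∧ G.Adj x₆ x₃) := by
  simp only [List.pairwise_cons, List.mem_cons, List.not_mem_nil, or_false] at hdist
  obtain ⟨hx1, hx2, hx3, hx4, hx5, -⟩ := hdist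
  have d12 : x₁ ≠ x₂ := hx1 x₂ (by tauto)
  have d13 : x₁ ≠ x₃ := hx1 x₃ (by tauto)
  have d14 : x₁ ≠ x₄ := hx1 x₄ (by tauto)
  have d15 : x₁ ≠ x₅ := hx1 x₅ (by tauto)
  have d16 : x₁ ≠ x₆ := hx1 x₆ (by tauto)
  have d23 : x₂ ≠ x₃ := hx2 x₃ (by tauto)
  have d24 : x₂ ≠ x₄ := hx2 x₄ (by tauto)
  have d25 : x₂ ≠ x₅ := hx2 x₅ (by tauto)
  have d26 : x₂ ≠ x₆ := hx2 x₆ (by tauto)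
  have d34 : x₃ ≠ x₄ := hx3 x₄ (by tauto)
  have d35 : x₃ ≠ x₅ := hx3 x₅ (by tauto)
  have d36 : x₃ ≠ x₆ := hx3 x₆ (by tauto)
  have d45 : x₄ ≠ x₅ := hx4 x₅ (by tauto)
  have d46 : x₄ ≠ x₆ := hx4 x₆ (by tauto)
  have d56 : x₅ ≠ x₆ := hx5 x₆ (by tauto)
  refine ⟨fun ⟨h61, h62⟩ => hfree ?_, fun ⟨h62, h63⟩ => hfree ?_, fun ⟨h61, h63⟩ => hfree ?_⟩
  · -- cycle x₆ x₁ x₄ x₃ x₅ x₂ with chord x₁x₅ (positions 1 and 4)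
    exact theta6_aux G x₆ x₁ x₄ x₃ x₅ x₂ d16.symm d46.symm d36.symm d56.symm d26.symm
      d14 d13 d15 d12 d34.symm d45 d24.symm d35 d23.symm d25.symm
      h61 h14 h34.symm h35 h25.symm h62.symm 1 4 (by decide) (by decide) (by decide) h15
  · -- cycle x₆ x₂ x₁ x₄ x₅ x₃ with chord x₁x₅ (positions 2 and 4)
    exact theta6_aux G x₆ x₂ x₁ x₄ x₅ x₃ d26.symm d16.symm d46.symm d56.symm d36.symm
      d12.symm d24 d25 d23 d14 d15 d13 d45 d34.symm d35.symm
      h62 h12.symm h14 h45 h35.symm h63.symm 2 4 (by decide) (by decide) (by decide) h15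
  · -- cycle x₆ x₁ x₂ x₅ x₄ x₃ with chord x₁x₅ (positions 1 and 3)
    exact theta6_aux G x₆ x₁ x₂ x₅ x₄ x₃ d16.symm d26.symm d56.symm d46.symm d36.symm
      d12 d15 d14 d13 d25 d24 d23 d45.symm d35.symm d34.symm
      h61 h12 h25 h45.symm h34.symm h63.symm 1 3 (by decide) (by decide) (by decide) h15
end

section
/- If G is a plane graph with no Theta graph on 6 vertices, and G contains a 4-cycle x₁x₂x₃x₄ bounding a face together with an edge x₁x₃ (so G restricted to these vertices is the 'diamond' B₄,b with both exterior 2-paths on 4-faces), then in each such 4-face x₂x₁x₄x₅ and x₂x₃x₄x₆ the edges x₂x₅, x₄x₅, x₂x₆, x₄x₆ lie in no triangle of G. -/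
open SimpleGraph

lemma theta6_helper {V : Type*} (G : SimpleGraph V) (a b c d e f : V)
    (hab : a ≠ b) (hac : a ≠ c) (had : a ≠ d) (hae : a ≠ e) (haf : a ≠ f)
    (hbc : b ≠ c) (hbd : b ≠ d) (hbe : b ≠ e) (hbf : b ≠ f)
    (hcd : c ≠ d) (hce : c ≠ e) (hcf : c ≠ f)
    (hde : d ≠ e) (hdf : d ≠ f) (hef : e ≠ f)
    (e1 : G.Adj a b) (e2 : G.Adj b c) (e3 : G.Adj c d) (e4 : G.Adj d e)
    (e5 : G.Adj e f) (e6 : G.Adj f a) (chord : G.Adj a c) : HasTheta6 G := by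
  refine ⟨![a,b,c,d,e,f], ?_, ?_, 0, 2, by decide, by decide, by decide, chord⟩
  · intro i j h
    fin_cases i <;> fin_cases j <;>
      first
        | rfl
        | exact absurd h hab | exact absurd h hab.symm
        | exact absurd h hac | exact absurd h hac.symm
        | exact absurd h had | exact absurd h had.symm
        | exact absurd h hae | exact absurd h hae.symm
        | exact absurd h haf | exact absurd h haf.symm
        | exact absurd h hbc | exact absurd h hbc.symm
        | exact absurd h hbd | exact absurd h hbd.symm
        | exact absurd h hbe | exact absurd h hbe.symm
        | exact absurd h hbf | exact absurd h hbf.symm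
        | exact absurd h hcd | exact absurd h hcd.symm
        | exact absurd h hce | exact absurd h hce.symm
        | exact absurd h hcf | exact absurd h hcf.symm
        | exact absurd h hde | exact absurd h hde.symm
        | exact absurd h hdf | exact absurd h hdf.symm
        | exact absurd h hef | exact absurd h hef.symm
  · intro i
    fin_cases i <;>
      first | exact e1 | exact e2 | exact e3 | exact e4 | exact e5 | exact e6

lemma aux_no_tri {V : Type*} (G : SimpleGraph V) (hfree : ¬ HasTheta6 G)
    (x₁ x₂ x₃ x₄ x₅ x₆ : V)
    (n12 : x₁ ≠ x₂) (n13 : x₁ ≠ x₃) (n14 : x₁ ≠ x₄) (n15 : x₁ ≠ x₅) (n16 : x₁ ≠ x₆)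
    (n23 : x₂ ≠ x₃) (n24 : x₂ ≠ x₄) (n25 : x₂ ≠ x₅) (n26 : x₂ ≠ x₆)
    (n34 : x₃ ≠ x₄) (n35 : x₃ ≠ x₅) (n36 : x₃ ≠ x₆)
    (n45 : x₄ ≠ x₅) (n46 : x₄ ≠ x₆) (n56 : x₅ ≠ x₆)
    (h12 : G.Adj x₁ x₂) (h23 : G.Adj x₂ x₃) (h34 : G.Adj x₃ x₄)
    (h14 : G.Adj x₁ x₄) (h13 : G.Adj x₁ x₃) (h24 : ¬ G.Adj x₂ x₄)
    (h25 : G.Adj x₂ x₅) (h45 : G.Adj x₄ x₅)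
    (h26 : G.Adj x₂ x₆) (h46 : G.Adj x₄ x₆) :
    ∀ w : V, ¬ (G.Adj x₂ w ∧ G.Adj x₅ w) := by
  rintro w ⟨h2w, h5w⟩
  have hw4 : w ≠ x₄ := fun h => h24 (h ▸ h2w)
  by_cases hw1 : w = x₁
  · subst hw1
    exact hfree (theta6_helper G x₂ x₅ w x₃ x₄ x₆
      n25 n12.symm n23 n24 n26 n15.symm n35.symm n45.symm n56 n13 n14 n16 n34 n36 n46
      h25 h5w h13 h34 h46 h26.symm h12.symm)
  by_cases hw3 : w = x₃
  · subst hw3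
    exact hfree (theta6_helper G x₂ x₅ w x₁ x₄ x₆
      n25 n23 n12.symm n24 n26 n35.symm n15.symm n45.symm n56 n13.symm n34 n36 n14 n16 n46
      h25 h5w h13.symm h14 h46 h26.symm h23)
  by_cases hw6 : w = x₆
  · subst hw6
    exact hfree (theta6_helper G x₂ w x₅ x₄ x₃ x₁
      n26 n25 n24 n23 n12.symm n56.symm n46.symm n36.symm n16.symm n45.symm n35.symm
      n15.symm n34.symm n14.symm n13.symm
      h26 h5w.symm h45.symm h34.symm h13.symm h12 h25)
  · exact hfree (theta6_helper G x₂ w x₅ x₄ x₃ x₁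
      h2w.ne n25 n24 n23 n12.symm h5w.ne.symm hw4 hw3 hw1 n45.symm n35.symm n15.symm
      n34.symm n14.symm n13.symm
      h2w h5w.symm h45.symm h34.symm h13.symm h12 h25)

/-- Suppose a planar graph `G` with no Theta graph on 6 vertices contains a
diamond `B₄,b` on `x₁x₂x₃x₄` (the 4-cycle plus the chord `x₁x₃`, induced, so
`x₂x₄` is not an edge) whose two exterior 2-paths lie on 4-faces
`x₂x₁x₄x₅` and `x₂x₃x₄x₆`. Then the four edges `x₂x₅, x₄x₅, x₂x₆, x₄x₆` lie
in no triangle of `G`. -/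
theorem theta6_diamond_bad_edges_triangle_free {V : Type*} (G : SimpleGraph V)
    (hplanar : IsPlanar G) (hfree : ¬ HasTheta6 G)
    (x₁ x₂ x₃ x₄ x₅ x₆ : V)
    (hdist : List.Pairwise (· ≠ ·) [x₁, x₂, x₃, x₄, x₅, x₆])
    (h12 : G.Adj x₁ x₂) (h23 : G.Adj x₂ x₃) (h34 : G.Adj x₃ x₄)
    (h14 : G.Adj x₁ x₄) (h13 : G.Adj x₁ x₃) (h24 : ¬ G.Adj x₂ x₄)
    (h25 : G.Adj x₂ x₅) (h45 : G.Adj x₄ x₅)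
    (h26 : G.Adj x₂ x₆) (h46 : G.Adj x₄ x₆) :
    (∀ w : V, ¬ (G.Adj x₂ w ∧ G.Adj x₅ w)) ∧
    (∀ w : V, ¬ (G.Adj x₄ w ∧ G.Adj x₅ w)) ∧
    (∀ w : V, ¬ (G.Adj x₂ w ∧ G.Adj x₆ w)) ∧
    (∀ w : V, ¬ (G.Adj x₄ w ∧ G.Adj x₆ w)) := by
  simp only [List.pairwise_cons, List.mem_cons, List.not_mem_nil, or_false] at hdist
  obtain ⟨h1, h2, h3, h4, h5, -⟩ := hdist
  have n12 := h1 x₂ (by tauto); have n13 := h1 x₃ (by tauto)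
  have n14 := h1 x₄ (by tauto); have n15 := h1 x₅ (by tauto)
  have n16 := h1 x₆ (by tauto)
  have n23 := h2 x₃ (by tauto); have n24 := h2 x₄ (by tauto)
  have n25 := h2 x₅ (by tauto); have n26 := h2 x₆ (by tauto)
  have n34 := h3 x₄ (by tauto); have n35 := h3 x₅ (by tauto)
  have n36 := h3 x₆ (by tauto)
  have n45 := h4 x₅ (by tauto); have n46 := h4 x₆ (by tauto)
  have n56 := h5 x₆ rfl
  have h42 : ¬ G.Adj x₄ x₂ := fun h => h24 h.symm
  refine ⟨?_, ?_, ?_, ?_⟩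
  · exact aux_no_tri G hfree x₁ x₂ x₃ x₄ x₅ x₆
      n12 n13 n14 n15 n16 n23 n24 n25 n26 n34 n35 n36 n45 n46 n56
      h12 h23 h34 h14 h13 h24 h25 h45 h26 h46
  · exact aux_no_tri G hfree x₁ x₄ x₃ x₂ x₅ x₆
      n14 n13 n12 n15 n16 n34.symm n24.symm n45 n46 n23.symm n35 n36 n25 n26 n56
      h14 h34.symm h23.symm h12 h13 h42 h45 h25 h46 h26
  · exact aux_no_tri G hfree x₁ x₂ x₃ x₄ x₆ x₅
      n12 n13 n14 n16 n15 n23 n24 n26 n25 n34 n36 n35 n46 n45 n56.symm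
      h12 h23 h34 h14 h13 h24 h26 h46 h25 h45
  · exact aux_no_tri G hfree x₁ x₄ x₃ x₂ x₆ x₅
      n14 n13 n12 n16 n15 n34.symm n24.symm n46 n45 n23.symm n36 n35 n26 n25 n56.symm
      h14 h34.symm h23.symm h12 h13 h42 h46 h26 h45 h25
end

section
/- If G is an n-vertex planar graph with a vertex v of degree at most 2 such that G - v has exactly 2 blocks, one of which has at least 6 vertices, and G contains no Theta graph on 6 vertices, then e(G) < (18/7)n - 48/7, assuming the inductive bound e(B) ≤ (18m - 38)/7 holds for any Θ₆-free 2-connected planar graph B on m ≥ 6 vertices. -/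
open SimpleGraph

/-- A graph is 2-connected: at least 3 vertices, and removing any single
vertex leaves a connected graph. -/
def IsTwoConnected {V : Type*} [Fintype V] (G : SimpleGraph V) : Prop :=
  3 ≤ Fintype.card V ∧ G.Connected ∧
    ∀ v : V, (G.induce {u : V | u ≠ v}).Connected

/-- A set of vertices inducing a connected subgraph which stays connected
(in the weak sense of `Preconnected`) after deleting any one of its vertices. -/
def IsTwoConnSet {V : Type*} (G : SimpleGraph V) (B : Set V) : Prop :=
  B.Nonempty ∧ (G.induce B).Preconnected ∧
    ∀ v ∈ B, (G.induce (B \ {v})).Preconnected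

/-- A block of `G`: a maximal subgraph without a cut vertex, described by
its vertex set. -/
def IsBlock {V : Type*} (G : SimpleGraph V) (B : Set V) : Prop :=
  IsTwoConnSet G B ∧ ∀ C : Set V, IsTwoConnSet G C → B ⊆ C → B = C

/-!
Every edge of `G` either meets `v` (at most two edges) or lies inside one of the two blocks
`B₁`, `B₂` of `G - v`, and two blocks share at most one vertex, so `|B₁| + |B₂| ≤ n`. The big
block has at most `(18|B₁| - 38)/7` edges by induction. The other block has at most
`(18|B₂| - 27)/7` edges when `|B₂| ≥ 2`: by induction if `|B₂| ≥ 6`, and by counting pairs if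
`|B₂| ≤ 5`, planarity ruling out `K₅`. If `|B₂| = 1` it has no edge and is disjoint from `B₁`, since
a block is never contained in another one. In both cases `7 e(G) ≤ 18n - 51`.
-/

section Blocks

variable {V : Type*} {G : SimpleGraph V} {A B C : Set V}

lemma SimpleGraph.induce_preconnected_of_subsingleton (h : A.Subsingleton) :
    (G.induce A).Preconnected :=
  have := h.coe_sort
  Preconnected.of_subsingleton

lemma SimpleGraph.edgeSet_induce_eq_empty_of_subsingleton (h : A.Subsingleton) :
    (G.induce A).edgeSet = ∅ :=
  have := h.coe_sort
  edgeSet_eq_empty.mpr (Subsingleton.elim _ _)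

lemma isTwoConnSet_singleton (u : V) : IsTwoConnSet G {u} :=
  ⟨Set.singleton_nonempty u, induce_preconnected_of_subsingleton Set.subsingleton_singleton,
    fun _ _ =>
      induce_preconnected_of_subsingleton (Set.subsingleton_singleton.anti Set.sdiff_subset)⟩

lemma SimpleGraph.Adj.isTwoConnSet_pair {a b : V} (h : G.Adj a b) : IsTwoConnSet G {a, b} := by
  refine ⟨Set.insert_nonempty a {b}, (induce_pair_connected_of_adj h).preconnected, ?_⟩
  rintro x (rfl | rfl)
  · exact induce_preconnected_of_subsingleton ((Set.subsingleton_singleton (a := b)).anti (by simp))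
  · exact induce_preconnected_of_subsingleton ((Set.subsingleton_singleton (a := a)).anti (by simp))

lemma IsTwoConnSet.preconnected_diff_singleton (hA : IsTwoConnSet G A) (x : V) :
    (G.induce (A \ {x})).Preconnected := by
  by_cases hx : x ∈ A
  · exact hA.2.2 x hx
  · rw [Set.sdiff_singleton_eq_self hx]; exact hA.2.1

lemma IsTwoConnSet.union (hA : IsTwoConnSet G A) (hB : IsTwoConnSet G B) {a b : V}
    (ha : a ∈ A ∩ B) (hb : b ∈ A ∩ B) (hab : a ≠ b) : IsTwoConnSet G (A ∪ B) := by
  refine ⟨hA.1.mono Set.subset_union_left,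
    (induce_union_connected hA.2.1 hB.2.1 ⟨a, ha⟩).preconnected, fun x _ => ?_⟩
  rw [Set.union_sdiff_distrib]
  refine (induce_union_connected (hA.preconnected_diff_singleton x)
    (hB.preconnected_diff_singleton x) ?_).preconnected
  rcases eq_or_ne a x with rfl | hax
  · exact ⟨b, ⟨hb.1, hab.symm⟩, ⟨hb.2, hab.symm⟩⟩
  · exact ⟨a, ⟨ha.1, hax⟩, ⟨ha.2, hax⟩⟩

lemma IsBlock.eq_of_subset (hB : IsBlock G B) (hC : IsTwoConnSet G C) (h : B ⊆ C) : B = C :=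
  hB.2 C hC h

lemma IsBlock.inter_subsingleton (hA : IsBlock G A) (hB : IsBlock G B) (hne : A ≠ B) :
    (A ∩ B).Subsingleton := by
  intro a ha b hb
  by_contra hab
  have hu := hA.1.union hB.1 ha hb hab
  exact hne ((hA.eq_of_subset hu Set.subset_union_left).trans
    (hB.eq_of_subset hu Set.subset_union_right).symm)

lemma IsBlock.ncard_inter_lt [Finite V] (hB : IsBlock G B) (hA : IsTwoConnSet G A)
    (hne : A ≠ B) : (A ∩ B).ncard < B.ncard := by
  refine Set.ncard_lt_ncard (Set.inter_subset_right.ssubset_of_ne fun h => hne ?_)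
  exact (hB.eq_of_subset hA (Set.inter_eq_right.mp h)).symm

lemma IsTwoConnSet.exists_isBlock_superset [Finite V] (hC : IsTwoConnSet G C) :
    ∃ B, IsBlock G B ∧ C ⊆ B := by
  obtain ⟨B, ⟨hB, hCB⟩, hmax⟩ := Set.Finite.exists_maximalFor id
    {B | IsTwoConnSet G B ∧ C ⊆ B} (Set.toFinite _) ⟨C, hC, subset_rfl⟩
  exact ⟨B, ⟨hB, fun D hD hBD => le_antisymm hBD (hmax ⟨hD, hCB.trans hBD⟩ hBD)⟩, hCB⟩

lemma IsTwoConnSet.subset_or_subset_of_forall_isBlock [Finite V] {B₁ B₂ : Set V}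
    (honly : ∀ B, IsBlock G B → B = B₁ ∨ B = B₂) (hC : IsTwoConnSet G C) :
    C ⊆ B₁ ∨ C ⊆ B₂ := by
  obtain ⟨B, hB, hCB⟩ := hC.exists_isBlock_superset
  rcases honly B hB with rfl | rfl
  exacts [Or.inl hCB, Or.inr hCB]

end Blocks

section Embeddings

variable {V V' W : Type*} {G : SimpleGraph V} {G' : SimpleGraph V'} {H : SimpleGraph W}

noncomputable def SimpleGraph.Embedding.induceImageIso (f : G ↪g G') (S : Set V) :
    G.induce S ≃g G'.induce (f '' S) where
  toEquiv := Equiv.Set.image f S f.injective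
  map_rel_iff' := by simp

lemma hasMinor_self (G : SimpleGraph V) : HasMinor G G := by
  refine ⟨some, fun w => ⟨w, rfl⟩, fun w => ?_, fun w₁ w₂ h => ⟨w₁, w₂, rfl, rfl, h⟩⟩
  exact induce_preconnected_of_subsingleton fun a ha b hb =>
    Option.some_injective _ (ha.trans hb.symm)

lemma HasMinor.map (f : G ↪g G') (h : HasMinor G H) : HasMinor G' H := by
  obtain ⟨φ, hsurj, hconn, hadj⟩ := h
  have hinv : ∀ v x, Function.partialInv f x = some v ↔ f v = x := f.injective.isPartialInv
  refine ⟨fun x => (Function.partialInv f x).bind φ, fun w => ?_, fun w => ?_, fun w₁ w₂ hw => ?_⟩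
  · obtain ⟨v, hv⟩ := hsurj w
    exact ⟨f v, by simp [Function.partialInv_left f.injective, hv]⟩
  · have hset : {x | (Function.partialInv f x).bind φ = some w} = f '' {v | φ v = some w} := by
      ext x
      simp only [Option.bind_eq_some_iff, hinv, Set.mem_ofPred_eq, Set.mem_image]
      tauto
    rw [hset]
    exact (f.induceImageIso _).preconnected_iff.mp (hconn w)
  · obtain ⟨v₁, v₂, h₁, h₂, hv⟩ := hadj w₁ w₂ hw
    exact ⟨f v₁, f v₂, by simp [Function.partialInv_left f.injective, h₁],
      by simp [Function.partialInv_left f.injective, h₂], f.map_adj_iff.mpr hv⟩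

lemma IsPlanar.comap (f : G ↪g G') (h : IsPlanar G') : IsPlanar G :=
  ⟨fun hm => h.1 (hm.map f), fun hm => h.2 (hm.map f)⟩

lemma HasTheta6.map (f : G ↪g G') (h : HasTheta6 G) : HasTheta6 G' := by
  obtain ⟨u, hinj, hcyc, i, j, hij, hji, hij', hadj⟩ := h
  exact ⟨f ∘ u, f.injective.comp hinj, fun t => f.map_adj_iff.mpr (hcyc t),
    i, j, hij, hji, hij', f.map_adj_iff.mpr hadj⟩

lemma IsPlanar.ne_top [Fintype W] (hW : Fintype.card W = 5) (h : IsPlanar H) : H ≠ ⊤ := by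
  rintro rfl
  exact h.1 ((hasMinor_self _).map
    (Embedding.completeGraph (Fintype.equivFinOfCardEq hW).symm.toEmbedding))

end Embeddings

lemma IsTwoConnSet.isTwoConnected_induce {V : Type*} {G : SimpleGraph V} {A : Set V}
    [Fintype A] (hA : IsTwoConnSet G A) (h3 : 3 ≤ Fintype.card A) :
    IsTwoConnected (G.induce A) := by
  have := hA.1.to_subtype
  refine ⟨h3, ⟨hA.2.1⟩, fun x => ?_⟩
  obtain ⟨y, hyx⟩ := Fintype.exists_ne_of_one_lt_card (by omega) x
  have : Nonempty {u : A | u ≠ x} := ⟨⟨y, hyx⟩⟩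
  have himage : Subtype.val '' {u : A | u ≠ x} = A \ {x.1} := by
    ext z
    simp [Subtype.ext_iff, and_comm]
  refine ⟨?_⟩
  rw [(Embedding.induce A).induceImageIso _ |>.preconnected_iff]
  exact himage ▸ hA.2.2 x x.2

namespace SimpleGraph

section EdgeCount

variable {V W : Type*} {G : SimpleGraph V}

lemma ncard_le_ncard_edgeSet_induce [Finite V] {A : Set V} {s : Set (Sym2 V)}
    (hs : s ⊆ G.edgeSet) (hsA : ∀ e ∈ s, ∀ x ∈ e, x ∈ A) :
    s.ncard ≤ (G.induce A).edgeSet.ncard := by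
  have hsub : s ⊆ Sym2.map Subtype.val '' (G.induce A).edgeSet := by
    intro e he
    induction e using Sym2.ind with
    | _ a b =>
      have ha := hsA _ he a (Sym2.mem_mk_left a b)
      have hb := hsA _ he b (Sym2.mem_mk_right a b)
      exact ⟨s(⟨a, ha⟩, ⟨b, hb⟩), hs he, rfl⟩
  calc s.ncard ≤ (Sym2.map Subtype.val '' (G.induce A).edgeSet).ncard :=
        Set.ncard_le_ncard hsub (Set.toFinite _)
    _ = (G.induce A).edgeSet.ncard :=
        Set.ncard_image_of_injective _ (Sym2.map.injective Subtype.val_injective)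

lemma ncard_edgeSet_le_add_of_adj [Finite V] {A B : Set V}
    (hAB : ∀ a b, G.Adj a b → (a ∈ A ∧ b ∈ A) ∨ (a ∈ B ∧ b ∈ B)) :
    G.edgeSet.ncard ≤ (G.induce A).edgeSet.ncard + (G.induce B).edgeSet.ncard := by
  let inside (S : Set V) : Set (Sym2 V) := {e ∈ G.edgeSet | ∀ x ∈ e, x ∈ S}
  have hcover : G.edgeSet ⊆ inside A ∪ inside B := by
    intro e he
    induction e using Sym2.ind with
    | _ a b =>
      rcases hAB a b he with ⟨ha, hb⟩ | ⟨ha, hb⟩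
      · exact Or.inl ⟨he, by simp [ha, hb]⟩
      · exact Or.inr ⟨he, by simp [ha, hb]⟩
  calc G.edgeSet.ncard ≤ (inside A ∪ inside B).ncard := Set.ncard_le_ncard hcover
    _ ≤ (inside A).ncard + (inside B).ncard := Set.ncard_union_le _ _
    _ ≤ _ := add_le_add (ncard_le_ncard_edgeSet_induce (fun _ he => he.1) fun _ he => he.2)
        (ncard_le_ncard_edgeSet_induce (fun _ he => he.1) fun _ he => he.2)

lemma ncard_edgeSet_le_ncard_neighborSet_add [Finite V] (v : V) :
    G.edgeSet.ncard ≤ (G.neighborSet v).ncard + (G.induce {u | u ≠ v}).edgeSet.ncard := by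
  classical
  let away : Set (Sym2 V) := {e ∈ G.edgeSet | ∀ x ∈ e, x ∈ {u | u ≠ v}}
  have hcover : G.edgeSet ⊆ G.incidenceSet v ∪ away := by
    intro e he
    by_cases hv : v ∈ e
    · exact Or.inl ⟨he, hv⟩
    · exact Or.inr ⟨he, fun x hx hxv => hv (hxv ▸ hx)⟩
  have hinc : (G.incidenceSet v).ncard = (G.neighborSet v).ncard :=
    Nat.card_congr (G.incidenceSetEquivNeighborSet v)
  calc G.edgeSet.ncard ≤ (G.incidenceSet v ∪ away).ncard := Set.ncard_le_ncard hcover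
    _ ≤ (G.incidenceSet v).ncard + away.ncard := Set.ncard_union_le _ _
    _ ≤ _ := hinc ▸ Nat.add_le_add_left
        (ncard_le_ncard_edgeSet_induce (fun _ he => he.1) fun _ he => he.2) _

lemma ncard_edgeSet_le_choose_two [Fintype W] (H : SimpleGraph W) :
    H.edgeSet.ncard ≤ (Fintype.card W).choose 2 := by
  classical
  rw [Set.ncard_eq_toFinset_card']
  exact card_edgeFinset_le_card_choose_two

lemma ncard_edgeSet_lt_choose_two [Fintype W] {H : SimpleGraph W} (h : H ≠ ⊤) :
    H.edgeSet.ncard < (Fintype.card W).choose 2 := by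
  classical
  rw [Set.ncard_eq_toFinset_card', ← card_edgeFinset_top_eq_card_choose_two]
  exact Finset.card_lt_card (edgeFinset_ssubset_edgeFinset.mpr (lt_top_iff_ne_top.mpr h))

end EdgeCount

end SimpleGraph

/-- The bound `e ≤ (18m - 27)/7`; for `m = 5` it says exactly that `K₅` is not planar. -/
lemma IsPlanar.seven_mul_ncard_edgeSet_add_le {W : Type*} [Fintype W] {H : SimpleGraph W}
    (h : IsPlanar H) (h2 : 2 ≤ Fintype.card W) (h5 : Fintype.card W ≤ 5) :
    7 * H.edgeSet.ncard + 27 ≤ 18 * Fintype.card W := by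
  have hchoose := ncard_edgeSet_le_choose_two H
  have hK5 : Fintype.card W = 5 → H.edgeSet.ncard < (Fintype.card W).choose 2 := fun hW =>
    ncard_edgeSet_lt_choose_two (h.ne_top hW)
  rw [Nat.choose_two_right] at hchoose hK5
  generalize Fintype.card W = k at *
  interval_cases k <;> omega

section TwoBlocks

variable {V : Type*} {G : SimpleGraph V} {B₁ B₂ : Set V}

lemma ncard_add_ncard_eq_of_forall_isBlock [Finite V]
    (honly : ∀ B, IsBlock G B → B = B₁ ∨ B = B₂) :
    B₁.ncard + B₂.ncard = Nat.card V + (B₁ ∩ B₂).ncard := by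
  have hunion : B₁ ∪ B₂ = Set.univ := Set.eq_univ_of_forall fun u =>
    ((isTwoConnSet_singleton u).subset_or_subset_of_forall_isBlock honly).imp (· rfl) (· rfl)
  rw [← Set.ncard_union_add_ncard_inter, hunion, Set.ncard_univ]

lemma ncard_edgeSet_le_of_forall_isBlock [Finite V]
    (honly : ∀ B, IsBlock G B → B = B₁ ∨ B = B₂) :
    G.edgeSet.ncard ≤ (G.induce B₁).edgeSet.ncard + (G.induce B₂).edgeSet.ncard :=
  ncard_edgeSet_le_add_of_adj fun _ _ hab =>
    (hab.isTwoConnSet_pair.subset_or_subset_of_forall_isBlock honly).imp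
      (fun h => ⟨h (by simp), h (by simp)⟩) (fun h => ⟨h (by simp), h (by simp)⟩)

end TwoBlocks

def InductiveEdgeBound : Prop :=
  ∀ (W : Type) [Fintype W] (B : SimpleGraph W),
    6 ≤ Fintype.card W → IsPlanar B → ¬ HasTheta6 B → IsTwoConnected B →
      (B.edgeSet.ncard : ℚ) ≤ (18 * Fintype.card W - 38) / 7

section InductiveEdgeBound

variable {V : Type} [Finite V] {H : SimpleGraph V} {B : Set V}

lemma InductiveEdgeBound.seven_mul_ncard_edgeSet_induce_add_le (hind : InductiveEdgeBound)
    (hplanar : IsPlanar H) (hfree : ¬ HasTheta6 H) (hB : IsTwoConnSet H B) (h6 : 6 ≤ B.ncard) :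
    7 * (H.induce B).edgeSet.ncard + 38 ≤ 18 * B.ncard := by
  have := Fintype.ofFinite B
  rw [← Nat.card_coe_set_eq B, Nat.card_eq_fintype_card] at h6 ⊢
  have := hind B (H.induce B) h6 (hplanar.comap (Embedding.induce B))
    (fun h => hfree (h.map (Embedding.induce B))) (hB.isTwoConnected_induce (by omega))
  have : (7 * (H.induce B).edgeSet.ncard + 38 : ℚ) ≤ 18 * Fintype.card B := by linarith
  exact_mod_cast this

lemma InductiveEdgeBound.seven_mul_ncard_edgeSet_induce_add_le_of_two_le
    (hind : InductiveEdgeBound) (hplanar : IsPlanar H) (hfree : ¬ HasTheta6 H)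
    (hB : IsTwoConnSet H B) (h2 : 2 ≤ B.ncard) :
    7 * (H.induce B).edgeSet.ncard + 27 ≤ 18 * B.ncard := by
  rcases le_or_gt 6 B.ncard with h6 | h5
  · have := hind.seven_mul_ncard_edgeSet_induce_add_le hplanar hfree hB h6
    omega
  · have := Fintype.ofFinite B
    rw [← Nat.card_coe_set_eq B, Nat.card_eq_fintype_card] at h2 h5 ⊢
    exact (hplanar.comap (Embedding.induce B)).seven_mul_ncard_edgeSet_add_le h2 (by omega)

end InductiveEdgeBound

/-- Suppose the inductive bound `e(B) ≤ (18m - 38)/7` holds for every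
Θ₆-free 2-connected planar graph `B` on `m ≥ 6` vertices. If `G` is an
`n`-vertex Θ₆-free planar graph with a vertex `v` of degree at most 2 such
that `G - v` has exactly two blocks, one of them with at least 6 vertices,
then `e(G) < 18n/7 - 48/7`. -/
theorem theta6_degree_two_two_blocks {V : Type} [Fintype V] (n : ℕ)
    (hind : ∀ (W : Type) [Fintype W] (B : SimpleGraph W),
      6 ≤ Fintype.card W → IsPlanar B → ¬ HasTheta6 B → IsTwoConnected B →
        (B.edgeSet.ncard : ℚ) ≤ (18 * Fintype.card W - 38) / 7)
    (G : SimpleGraph V) (hcard : Fintype.card V = n)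
    (hplanar : IsPlanar G) (hfree : ¬ HasTheta6 G)
    (v : V) (hdeg : (G.neighborSet v).ncard ≤ 2)
    (B₁ B₂ : Set {u : V // u ≠ v})
    (hB₁ : IsBlock (G.induce {u : V | u ≠ v}) B₁)
    (hB₂ : IsBlock (G.induce {u : V | u ≠ v}) B₂) (hne : B₁ ≠ B₂)
    (honly : ∀ B, IsBlock (G.induce {u : V | u ≠ v}) B → B = B₁ ∨ B = B₂)
    (hbig : 6 ≤ B₁.ncard) :
    (G.edgeSet.ncard : ℚ) < 18 / 7 * n - 48 / 7 := by
  classical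
  set H := G.induce {u : V | u ≠ v}
  have hHplanar : IsPlanar H := hplanar.comap (Embedding.induce _)
  have hHfree : ¬ HasTheta6 H := fun h => hfree (h.map (Embedding.induce _))
  have hG : G.edgeSet.ncard ≤ (G.neighborSet v).ncard + H.edgeSet.ncard :=
    ncard_edgeSet_le_ncard_neighborSet_add v
  have hH : H.edgeSet.ncard ≤ (H.induce B₁).edgeSet.ncard + (H.induce B₂).edgeSet.ncard :=
    ncard_edgeSet_le_of_forall_isBlock honly
  have hverts : B₁.ncard + B₂.ncard = n - 1 + (B₁ ∩ B₂).ncard := by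
    rw [ncard_add_ncard_eq_of_forall_isBlock honly, Nat.card_eq_fintype_card, Set.card_ne_eq,
      hcard]
  have hinter : (B₁ ∩ B₂).ncard ≤ 1 :=
    Set.ncard_le_one_iff_subsingleton.mpr (hB₁.inter_subsingleton hB₂ hne)
  have hinter_lt : (B₁ ∩ B₂).ncard < B₂.ncard := hB₂.ncard_inter_lt hB₁.1 hne
  have he₁ : 7 * (H.induce B₁).edgeSet.ncard + 38 ≤ 18 * B₁.ncard :=
    InductiveEdgeBound.seven_mul_ncard_edgeSet_induce_add_le hind hHplanar hHfree hB₁.1 hbig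
  have hnat : 7 * G.edgeSet.ncard + 48 < 18 * n := by
    rcases (show B₂.ncard = 1 ∨ 2 ≤ B₂.ncard by omega) with hk | hk
    · have he₂ : (H.induce B₂).edgeSet = ∅ :=
        edgeSet_induce_eq_empty_of_subsingleton (Set.ncard_le_one_iff_subsingleton.mp hk.le)
      rw [he₂, Set.ncard_empty] at hH
      omega
    · have he₂ : 7 * (H.induce B₂).edgeSet.ncard + 27 ≤ 18 * B₂.ncard :=
        InductiveEdgeBound.seven_mul_ncard_edgeSet_induce_add_le_of_two_le hind hHplanar hHfree
          hB₂.1 hk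
      omega
  have hrat : (7 * G.edgeSet.ncard + 48 : ℚ) < 18 * n := by exact_mod_cast hnat
  linarith
end
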